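/- arXiv:2508.00192 — 3 statements merged into one kernel-verified Lean document; each statement's English description precedes it below -/
import Mathlib

section
/- For every integer n ≥ 2, the set B = {2², 2³, …, 2ⁿ} is a distinct-distance set modulo m = 2ⁿ + 2: m > max(B), and for any i, j, i′, j′ ∈ B with i ≠ j, i′ ≠ j′ and {i, j} ≠ {i′, j′}, one has i − j ≢ i′ − j′ (mod m). -/
private lemma key0 (d b c : ℕ) (h : 1 + 2 ^ d = 2 ^ b + 2 ^ c) :
    (0 = b ∧ d = c) ∨ (0 = c ∧ d = b) := by
  have hb1 : 1 ≤ 2 ^ b := Nat.one_le_two_pow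
  have hc1 : 1 ≤ 2 ^ c := Nat.one_le_two_pow
  rcases Nat.eq_zero_or_pos d with hd | hd
  · subst hd
    rcases Nat.eq_zero_or_pos b with hb | hb
    · rcases Nat.eq_zero_or_pos c with hc | hc
      · left; omega
      · have : 2 ∣ 2 ^ c := dvd_pow_self 2 hc.ne'
        subst hb; simp at h; omega
    · have : 2 ∣ 2 ^ b := dvd_pow_self 2 hb.ne'
      omega
  · have hdd : 2 ∣ 2 ^ d := dvd_pow_self 2 hd.ne'
    rcases Nat.eq_zero_or_pos b with hb | hb
    · subst hb
      left
      have hdc : 2 ^ d = 2 ^ c := by omega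
      exact ⟨rfl, Nat.pow_right_injective (le_refl 2) hdc⟩
    · rcases Nat.eq_zero_or_pos c with hc | hc
      · subst hc
        right
        have hdb : 2 ^ d = 2 ^ b := by omega
        exact ⟨rfl, Nat.pow_right_injective (le_refl 2) hdb⟩
      · have : 2 ∣ 2 ^ b := dvd_pow_self 2 hb.ne'
        have : 2 ∣ 2 ^ c := dvd_pow_self 2 hc.ne'
        omega

private lemma key' : ∀ s a b c d : ℕ, a + b + c + d ≤ s →
    2 ^ a + 2 ^ d = 2 ^ b + 2 ^ c → (a = b ∧ d = c) ∨ (a = c ∧ d = b) := by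
  intro s
  induction s with
  | zero => intro a b c d hs h; left; omega
  | succ s IH =>
    intro a b c d hs h
    rcases Nat.eq_zero_or_pos a with ha | ha
    · subst ha
      simpa using key0 d b c (by simpa using h)
    rcases Nat.eq_zero_or_pos d with hd | hd
    · subst hd
      have := key0 a b c (by omega)
      omega
    rcases Nat.eq_zero_or_pos b with hb | hb
    · subst hb
      have := key0 c a d (by omega)
      omega
    rcases Nat.eq_zero_or_pos c with hc | hc
    · subst hc
      have := key0 b a d (by omega)
      omega
    · have ea : 2 ^ a = 2 * 2 ^ (a - 1) := by
        conv_lhs => rw [show a = (a - 1) + 1 by omega]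
        ring
      have eb : 2 ^ b = 2 * 2 ^ (b - 1) := by
        conv_lhs => rw [show b = (b - 1) + 1 by omega]
        ring
      have ec : 2 ^ c = 2 * 2 ^ (c - 1) := by
        conv_lhs => rw [show c = (c - 1) + 1 by omega]
        ring
      have ed : 2 ^ d = 2 * 2 ^ (d - 1) := by
        conv_lhs => rw [show d = (d - 1) + 1 by omega]
        ring
      have h' : 2 ^ (a - 1) + 2 ^ (d - 1) = 2 ^ (b - 1) + 2 ^ (c - 1) := by omega
      have := IH (a - 1) (b - 1) (c - 1) (d - 1) (by omega) h'
      omega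

private lemma key (a b c d : ℕ) (h : 2 ^ a + 2 ^ d = 2 ^ b + 2 ^ c) :
    (a = b ∧ d = c) ∨ (a = c ∧ d = b) :=
  key' (a + b + c + d) a b c d le_rfl h

/-- Property 2 of the paper: for every integer `n ≥ 2`, the set `B = {2², 2³, …, 2ⁿ}` is a
distinct-distance set modulo `m = 2ⁿ + 2`: `m > max B`, and any two distinct unordered pairs
of distinct elements of `B` have incongruent differences modulo `m`. -/
theorem powersOfTwo_modular_distinct_distance (n : ℕ) (hn : 2 ≤ n) :
    (∀ b ∈ (Finset.Icc 2 n).image (fun k => (2 : ℤ) ^ k), b < 2 ^ n + 2) ∧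
    (∀ i ∈ (Finset.Icc 2 n).image (fun k => (2 : ℤ) ^ k),
     ∀ j ∈ (Finset.Icc 2 n).image (fun k => (2 : ℤ) ^ k),
     ∀ i' ∈ (Finset.Icc 2 n).image (fun k => (2 : ℤ) ^ k),
     ∀ j' ∈ (Finset.Icc 2 n).image (fun k => (2 : ℤ) ^ k),
       i ≠ j → i' ≠ j' → ({i, j} : Finset ℤ) ≠ {i', j'} →
       ¬ Int.ModEq (2 ^ n + 2) (i - j) (i' - j')) := by
  constructor
  · intro b hb
    simp only [Finset.mem_image, Finset.mem_Icc] at hb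
    obtain ⟨k, ⟨hk2, hkn⟩, rfl⟩ := hb
    have : (2 : ℤ) ^ k ≤ 2 ^ n := pow_le_pow_right₀ (by norm_num) hkn
    linarith
  · intro i hi j hj i' hi' j' hj' hij hij' hpair h
    simp only [Finset.mem_image, Finset.mem_Icc] at hi hj hi' hj'
    obtain ⟨a, ⟨ha2, han⟩, rfl⟩ := hi
    obtain ⟨b, ⟨hb2, hbn⟩, rfl⟩ := hj
    obtain ⟨c, ⟨hc2, hcn⟩, rfl⟩ := hi'
    obtain ⟨d, ⟨hd2, hdn⟩, rfl⟩ := hj'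
    have hdvd : (2 ^ n + 2 : ℤ) ∣ (2 ^ c - 2 ^ d) - (2 ^ a - 2 ^ b) := h.dvd
    have hlow : ∀ k : ℕ, 2 ≤ k → (4 : ℤ) ≤ 2 ^ k := fun k hk => by
      calc (4 : ℤ) = 2 ^ 2 := by norm_num
        _ ≤ 2 ^ k := pow_le_pow_right₀ (by norm_num) hk
    have hhigh : ∀ k : ℕ, k ≤ n → (2 : ℤ) ^ k ≤ 2 ^ n := fun k hk =>
      pow_le_pow_right₀ (by norm_num) hk
    have h4a := hlow a ha2; have h4b := hlow b hb2
    have h4c := hlow c hc2; have h4d := hlow d hd2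
    have hna := hhigh a han; have hnb := hhigh b hbn
    have hnc := hhigh c hcn; have hnd := hhigh d hdn
    have h4dvd : (4 : ℤ) ∣ (2 ^ c - 2 ^ d) - (2 ^ a - 2 ^ b) := by
      have hp : ∀ k : ℕ, 2 ≤ k → (4 : ℤ) ∣ 2 ^ k := fun k hk =>
        (show (4 : ℤ) = 2 ^ 2 by norm_num) ▸ pow_dvd_pow 2 hk
      exact dvd_sub (dvd_sub (hp c hc2) (hp d hd2)) (dvd_sub (hp a ha2) (hp b hb2))
    have h4m : (4 : ℤ) ∣ 2 ^ n :=
      (show (4 : ℤ) = 2 ^ 2 by norm_num) ▸ pow_dvd_pow 2 hn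
    obtain ⟨k, hk⟩ := hdvd
    have hm0 : (0 : ℤ) < 2 ^ n + 2 := by positivity
    have hklt : k < 2 := by
      have h1 : (2 ^ n + 2) * k < (2 ^ n + 2) * 2 := by linarith
      exact (mul_lt_mul_iff_right₀ hm0).mp h1
    have hkgt : -2 < k := by
      have h1 : (2 ^ n + 2) * (-2) < (2 ^ n + 2) * k := by linarith
      exact (mul_lt_mul_iff_right₀ hm0).mp h1
    interval_cases k
    · obtain ⟨t, ht⟩ := h4m
      obtain ⟨u, hu⟩ := h4dvd
      omega
    · have hz : (2 : ℤ) ^ a + 2 ^ d = 2 ^ b + 2 ^ c := by linarith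
      have hnat : 2 ^ a + 2 ^ d = 2 ^ b + 2 ^ c := by exact_mod_cast hz
      rcases key a b c d hnat with ⟨hab, hdc⟩ | ⟨hac, hdb⟩
      · exact hij (by rw [hab])
      · exact hpair (by rw [hac, hdb])
    · obtain ⟨t, ht⟩ := h4m
      obtain ⟨u, hu⟩ := h4dvd
      omega
end

section
/- The Greek-cross nonomino does not tile the plane by translations. Precisely: let S = {(0,0), (1,0), (2,0), (−1,0), (−2,0), (0,1), (0,2), (0,−1), (0,−2)} ⊆ ℤ². There is no set V ⊆ ℤ² such that the translates v + S, for v ∈ V, are pairwise disjoint and their union equals ℤ². -/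
open Pointwise


/-- The Greek-cross nonomino: a center cell together with arms of length 2 in each of the
four axis directions. -/
def greekCross : Finset (ℤ × ℤ) :=
  {(0, 0), (1, 0), (2, 0), (-1, 0), (-2, 0), (0, 1), (0, 2), (0, -1), (0, -2)}

/-- The Greek-cross nonomino does not tile the plane by translations: there is no set `V ⊆ ℤ²`
such that the translates `v + S`, for `v ∈ V`, are pairwise disjoint and cover all of `ℤ²`. -/
theorem greekCross_not_tiles_plane :
    ¬ ∃ V : Set (ℤ × ℤ),
      V.PairwiseDisjoint (fun v => (fun t => v + t) '' (greekCross : Set (ℤ × ℤ))) ∧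
      ⋃ v ∈ V, (fun t => v + t) '' (greekCross : Set (ℤ × ℤ)) = Set.univ := by
  rintro ⟨V, hdisj, hcover⟩
  -- uniqueness of covering tile
  have huniq : ∀ u v : ℤ × ℤ, u ∈ V → v ∈ V → ∀ s t : ℤ × ℤ,
      s ∈ greekCross → t ∈ greekCross → u + s = v + t → u = v := by
    intro u v hu hv s t hs ht hst
    by_contra hne
    have hd := hdisj hu hv hne
    have h1 : u + s ∈ (fun t => u + t) '' (greekCross : Set (ℤ × ℤ)) :=
      ⟨s, by simpa using hs, rfl⟩
    have h2 : u + s ∈ (fun t' => v + t') '' (greekCross : Set (ℤ × ℤ)) :=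
      ⟨t, by simpa using ht, hst.symm⟩
    exact Set.disjoint_left.mp hd h1 h2
  -- existence of covering tile, in coordinates
  have hex : ∀ p1 p2 : ℤ, ∃ v1 v2 : ℤ, (v1, v2) ∈ V ∧
      ∃ s1 s2 : ℤ, ((s1, s2) : ℤ × ℤ) ∈ greekCross ∧ p1 = v1 + s1 ∧ p2 = v2 + s2 := by
    intro p1 p2
    have : ((p1, p2) : ℤ × ℤ) ∈ ⋃ v ∈ V, (fun t => v + t) '' (greekCross : Set (ℤ × ℤ)) := by
      rw [hcover]; trivial
    simp only [Set.mem_iUnion, Set.mem_image, Finset.coe_sort_coe, Finset.mem_coe] at this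
    obtain ⟨⟨v1, v2⟩, hv, ⟨s1, s2⟩, hs, hp⟩ := this
    refine ⟨v1, v2, hv, s1, s2, hs, ?_, ?_⟩
    · exact congrArg Prod.fst hp.symm
    · exact congrArg Prod.snd hp.symm
  -- the clash lemma: two tiles at difference in S - S coincide
  have kill : ∀ u1 u2 v1 v2 : ℤ, (u1, u2) ∈ V → (v1, v2) ∈ V → ∀ d1 d2 : ℤ,
      u1 = v1 + d1 → u2 = v2 + d2 →
      ((d1, d2) : ℤ × ℤ) ∈ (greekCross - greekCross : Finset (ℤ × ℤ)) →
      ¬(d1 = 0 ∧ d2 = 0) → False := by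
    intro u1 u2 v1 v2 hu hv d1 d2 h1 h2 hmem hne
    rw [Finset.mem_sub] at hmem
    obtain ⟨s, hs, t, ht, hst⟩ := hmem
    have he : (u1, u2) + t = (v1, v2) + s := by
      have e1 : s.1 - t.1 = d1 := congrArg Prod.fst hst
      have e2 : s.2 - t.2 = d2 := congrArg Prod.snd hst
      have : ((u1 + t.1, u2 + t.2) : ℤ × ℤ) = (v1 + s.1, v2 + s.2) := by
        rw [Prod.mk.injEq]; omega
      simpa [Prod.ext_iff] using this
    have := huniq _ _ hu hv t s ht hs he
    rw [Prod.mk.injEq] at this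
    omega
  obtain ⟨x, y, hc, -⟩ := hex 0 0
  obtain ⟨a1, a2, ha, s1, s2, hs, h1, h2⟩ := hex (x + 1) (y + 1)
  simp only [greekCross, Finset.mem_insert, Finset.mem_singleton, Prod.mk.injEq] at hs
  rcases hs with ⟨e1, e2⟩|⟨e1, e2⟩|⟨e1, e2⟩|⟨e1, e2⟩|⟨e1, e2⟩|⟨e1, e2⟩|⟨e1, e2⟩|⟨e1, e2⟩|⟨e1, e2⟩
  · exact kill a1 a2 x y ha hc (1) (1) (by omega) (by omega) (by decide) (by decide)
  · exact kill a1 a2 x y ha hc (0) (1) (by omega) (by omega) (by decide) (by decide)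
  · exact kill a1 a2 x y ha hc (-1) (1) (by omega) (by omega) (by decide) (by decide)
  · exact kill a1 a2 x y ha hc (2) (1) (by omega) (by omega) (by decide) (by decide)
  · -- a = c + (3, 1)
    obtain ⟨b1, b2, hb, s1, s2, hs, h1, h2⟩ := hex (x + 1) (y + 2)
    simp only [greekCross, Finset.mem_insert, Finset.mem_singleton, Prod.mk.injEq] at hs
    rcases hs with ⟨e1, e2⟩|⟨e1, e2⟩|⟨e1, e2⟩|⟨e1, e2⟩|⟨e1, e2⟩|⟨e1, e2⟩|⟨e1, e2⟩|⟨e1, e2⟩|⟨e1, e2⟩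
    · exact kill b1 b2 x y hb hc (1) (2) (by omega) (by omega) (by decide) (by decide)
    · exact kill b1 b2 x y hb hc (0) (2) (by omega) (by omega) (by decide) (by decide)
    · exact kill b1 b2 x y hb hc (-1) (2) (by omega) (by omega) (by decide) (by decide)
    · exact kill b1 b2 x y hb hc (2) (2) (by omega) (by omega) (by decide) (by decide)
    · exact kill b1 b2 a1 a2 hb ha (0) (1) (by omega) (by omega) (by decide) (by decide)
    · exact kill b1 b2 x y hb hc (1) (1) (by omega) (by omega) (by decide) (by decide)
    · exact kill b1 b2 x y hb hc (1) (0) (by omega) (by omega) (by decide) (by decide)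
    · exact kill b1 b2 a1 a2 hb ha (-2) (2) (by omega) (by omega) (by decide) (by decide)
    · -- b = c + (1, 4)
      obtain ⟨w1, w2, hw, s1, s2, hs, h1, h2⟩ := hex (x + 2) (y + 2)
      simp only [greekCross, Finset.mem_insert, Finset.mem_singleton, Prod.mk.injEq] at hs
      rcases hs with ⟨e1, e2⟩|⟨e1, e2⟩|⟨e1, e2⟩|⟨e1, e2⟩|⟨e1, e2⟩|⟨e1, e2⟩|⟨e1, e2⟩|⟨e1, e2⟩|⟨e1, e2⟩
      · exact kill w1 w2 x y hw hc (2) (2) (by omega) (by omega) (by decide) (by decide)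
      · exact kill w1 w2 x y hw hc (1) (2) (by omega) (by omega) (by decide) (by decide)
      · exact kill w1 w2 x y hw hc (0) (2) (by omega) (by omega) (by decide) (by decide)
      · exact kill w1 w2 a1 a2 hw ha (0) (1) (by omega) (by omega) (by decide) (by decide)
      · exact kill w1 w2 a1 a2 hw ha (1) (1) (by omega) (by omega) (by decide) (by decide)
      · exact kill w1 w2 x y hw hc (2) (1) (by omega) (by omega) (by decide) (by decide)
      · exact kill w1 w2 x y hw hc (2) (0) (by omega) (by omega) (by decide) (by decide)
      · exact kill w1 w2 a1 a2 hw ha (-1) (2) (by omega) (by omega) (by decide) (by decide)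
      · exact kill w1 w2 b1 b2 hw hb (1) (0) (by omega) (by omega) (by decide) (by decide)
  · exact kill a1 a2 x y ha hc (1) (0) (by omega) (by omega) (by decide) (by decide)
  · exact kill a1 a2 x y ha hc (1) (-1) (by omega) (by omega) (by decide) (by decide)
  · exact kill a1 a2 x y ha hc (1) (2) (by omega) (by omega) (by decide) (by decide)
  · -- a = c + (1, 3)
    obtain ⟨b1, b2, hb, s1, s2, hs, h1, h2⟩ := hex (x + 2) (y + 1)
    simp only [greekCross, Finset.mem_insert, Finset.mem_singleton, Prod.mk.injEq] at hs
    rcases hs with ⟨e1, e2⟩|⟨e1, e2⟩|⟨e1, e2⟩|⟨e1, e2⟩|⟨e1, e2⟩|⟨e1, e2⟩|⟨e1, e2⟩|⟨e1, e2⟩|⟨e1, e2⟩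
    · exact kill b1 b2 x y hb hc (2) (1) (by omega) (by omega) (by decide) (by decide)
    · exact kill b1 b2 x y hb hc (1) (1) (by omega) (by omega) (by decide) (by decide)
    · exact kill b1 b2 x y hb hc (0) (1) (by omega) (by omega) (by decide) (by decide)
    · exact kill b1 b2 a1 a2 hb ha (2) (-2) (by omega) (by omega) (by decide) (by decide)
    · -- b = c + (4, 1)
      obtain ⟨w1, w2, hw, s1, s2, hs, h1, h2⟩ := hex (x + 2) (y + 2)
      simp only [greekCross, Finset.mem_insert, Finset.mem_singleton, Prod.mk.injEq] at hs
      rcases hs with ⟨e1, e2⟩|⟨e1, e2⟩|⟨e1, e2⟩|⟨e1, e2⟩|⟨e1, e2⟩|⟨e1, e2⟩|⟨e1, e2⟩|⟨e1, e2⟩|⟨e1, e2⟩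
      · exact kill w1 w2 x y hw hc (2) (2) (by omega) (by omega) (by decide) (by decide)
      · exact kill w1 w2 x y hw hc (1) (2) (by omega) (by omega) (by decide) (by decide)
      · exact kill w1 w2 x y hw hc (0) (2) (by omega) (by omega) (by decide) (by decide)
      · exact kill w1 w2 a1 a2 hw ha (2) (-1) (by omega) (by omega) (by decide) (by decide)
      · exact kill w1 w2 b1 b2 hw hb (0) (1) (by omega) (by omega) (by decide) (by decide)
      · exact kill w1 w2 x y hw hc (2) (1) (by omega) (by omega) (by decide) (by decide)
      · exact kill w1 w2 x y hw hc (2) (0) (by omega) (by omega) (by decide) (by decide)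
      · exact kill w1 w2 a1 a2 hw ha (1) (0) (by omega) (by omega) (by decide) (by decide)
      · exact kill w1 w2 a1 a2 hw ha (1) (1) (by omega) (by omega) (by decide) (by decide)
    · exact kill b1 b2 x y hb hc (2) (0) (by omega) (by omega) (by decide) (by decide)
    · exact kill b1 b2 x y hb hc (2) (-1) (by omega) (by omega) (by decide) (by decide)
    · exact kill b1 b2 x y hb hc (2) (2) (by omega) (by omega) (by decide) (by decide)
    · exact kill b1 b2 a1 a2 hb ha (1) (0) (by omega) (by omega) (by decide) (by decide)
end

section
/- Undecidability of translational tiling is monotone in the parameters: fix positive integers n₀ ≤ n and k₀ ≤ k. If the predicate on k₀-tuples of finite nonempty subsets of ℤ^{n₀} given by "the k₀ tiles translationally tile ℤ^{n₀}" is not computable, then the predicate on k-tuples of finite nonempty subsets of ℤⁿ given by "the k tiles translationally tile ℤⁿ" is not computable. -/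
/-- A set of `k` tiles (finite subsets of `ℤⁿ`) translationally tiles `ℤⁿ` if there exists a
set `Λ` of placements `(i, v)` with `i ∈ {1,…,k}` and `v ∈ ℤⁿ` such that the translates
`v + Tᵢ`, for `(i, v) ∈ Λ`, are pairwise disjoint and their union is all of `ℤⁿ`. -/
def TranslTiles (n k : ℕ) (T : Fin k → Finset (Fin n → ℤ)) : Prop :=
  ∃ Λ : Set (Fin k × (Fin n → ℤ)),
    Λ.PairwiseDisjoint (fun p => (fun t => p.2 + t) '' ((T p.1 : Finset (Fin n → ℤ)) : Set (Fin n → ℤ))) ∧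
    ⋃ p ∈ Λ, (fun t => p.2 + t) '' ((T p.1 : Finset (Fin n → ℤ)) : Set (Fin n → ℤ)) = Set.univ

section Aux

variable {n₀ k₀ n k : ℕ}

def tproj (hk₀ : 0 < k₀) (hk : k₀ ≤ k) (i : Fin k) : Fin k₀ := ⟨min i.val (k₀ - 1), by omega⟩

def tpad (hn : n₀ ≤ n) (v : Fin n₀ → ℤ) : Fin n → ℤ :=
  fun j => if h : j.val < n₀ then v ⟨j.val, h⟩ else 0

def tres (hn : n₀ ≤ n) (w : Fin n → ℤ) : Fin n₀ → ℤ := fun i => w (Fin.castLE hn i)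

lemma tres_pad (hn : n₀ ≤ n) (v : Fin n₀ → ℤ) : tres hn (tpad hn v) = v := by
  funext i; simp [tres, tpad, i.isLt]

lemma tpad_add (hn : n₀ ≤ n) (a b : Fin n₀ → ℤ) : tpad hn (a + b) = tpad hn a + tpad hn b := by
  funext j; by_cases h : j.val < n₀ <;> simp [tpad, h]

lemma tres_add (hn : n₀ ≤ n) (a b : Fin n → ℤ) : tres hn (a + b) = tres hn a + tres hn b := rfl

lemma tproj_castLE (hk₀ : 0 < k₀) (hk : k₀ ≤ k) (i : Fin k₀) : tproj hk₀ hk (Fin.castLE hk i) = i := by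
  rcases i with ⟨i, hi⟩; simp only [tproj, Fin.castLE]; congr 1; omega

lemma tiling_iff (hk₀ : 0 < k₀) (hn : n₀ ≤ n) (hk : k₀ ≤ k) (T : Fin k₀ → Finset (Fin n₀ → ℤ)) :
    TranslTiles n₀ k₀ T ↔
      TranslTiles n k (fun i => (T (tproj hk₀ hk i)).image (tpad hn)) := by
  constructor
  · rintro ⟨Λ, hdis, hcov⟩
    refine ⟨{ p | p.1.val < k₀ ∧ (tproj hk₀ hk p.1, tres hn p.2) ∈ Λ }, ?_, ?_⟩
    · rintro p ⟨hpk, hpΛ⟩ q ⟨hqk, hqΛ⟩ hne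
      rw [Function.onFun]
      rw [Set.disjoint_left]
      rintro x ⟨t, ht, hxt⟩ ⟨s, hs, hxs⟩
      simp only [Finset.coe_image, Set.mem_image, Finset.mem_coe] at ht hs
      obtain ⟨t₀, ht₀, rfl⟩ := ht
      obtain ⟨s₀, hs₀, rfl⟩ := hs
      have hres : tres hn x ∈ ((fun u => (tproj hk₀ hk p.1, tres hn p.2).2 + u) ''
          (T (tproj hk₀ hk p.1) : Set (Fin n₀ → ℤ))) ∩
          ((fun u => (tproj hk₀ hk q.1, tres hn q.2).2 + u) ''
          (T (tproj hk₀ hk q.1) : Set (Fin n₀ → ℤ))) := by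
        constructor
        · exact ⟨t₀, ht₀, by rw [← hxt, tres_add, tres_pad]⟩
        · exact ⟨s₀, hs₀, by rw [← hxs, tres_add, tres_pad]⟩
      have heq : (tproj hk₀ hk p.1, tres hn p.2) = (tproj hk₀ hk q.1, tres hn q.2) := by
        by_contra hne'
        have := hdis hpΛ hqΛ hne'
        rw [Function.onFun, Set.disjoint_iff_inter_eq_empty] at this
        rw [this] at hres
        exact hres
      apply hne
      have h1 : p.1 = q.1 := by
        have := congrArg Prod.fst heq
        simp only [tproj] at this
        have hv : min p.1.val (k₀ - 1) = min q.1.val (k₀ - 1) := congrArg Fin.val this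
        ext
        omega
      have h2 : p.2 = q.2 := by
        funext j
        by_cases hj : j.val < n₀
        · have := congrArg Prod.snd heq
          have := congrFun this ⟨j.val, hj⟩
          simpa [tres, Fin.castLE] using this
        · have hpj : p.2 j = x j := by
            rw [← hxt]; simp [tpad, hj]
          have hqj : q.2 j = x j := by
            rw [← hxs]; simp [tpad, hj]
          rw [hpj, hqj]
      exact Prod.ext h1 h2
    · apply Set.eq_univ_of_forall
      intro x
      have hx : tres hn x ∈ ⋃ p ∈ Λ, (fun t => p.2 + t) '' ((T p.1 : Finset _) : Set _) := by
        rw [hcov]; trivial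
      simp only [Set.mem_iUnion, Set.mem_image, Finset.mem_coe] at hx
      obtain ⟨⟨i, v⟩, hiv, t, ht, hxt⟩ := hx
      refine Set.mem_biUnion (s := { p : Fin k × (Fin n → ℤ) |
        p.1.val < k₀ ∧ (tproj hk₀ hk p.1, tres hn p.2) ∈ Λ })
        (x := (Fin.castLE hk i, x - tpad hn t)) ?_ ?_
      · constructor
        · exact i.isLt
        · rw [tproj_castLE]
          have : tres hn (x - tpad hn t) = v := by
            funext j
            have := congrFun hxt j
            simp only [tres, Pi.sub_apply, Pi.add_apply] at this ⊢
            have hp : tpad hn t (Fin.castLE hn j) = t j := by simp [tpad, j.isLt, Fin.castLE]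
            omega
          rw [this]
          exact hiv
      · refine ⟨tpad hn t, ?_, by simp⟩
        simp only [Finset.coe_image, Set.mem_image, Finset.mem_coe]
        exact ⟨t, by rwa [tproj_castLE], rfl⟩
  · rintro ⟨Λ', hdis, hcov⟩
    refine ⟨{ q | ∃ p ∈ Λ', q.1 = tproj hk₀ hk p.1 ∧ q.2 = tres hn p.2 ∧
        ∀ j : Fin n, n₀ ≤ j.val → p.2 j = 0 }, ?_, ?_⟩
    · rintro q1 ⟨p1, hp1, hq11, hq12, hz1⟩ q2 ⟨p2, hp2, hq21, hq22, hz2⟩ hne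
      rw [Function.onFun, Set.disjoint_left]
      rintro x₀ ⟨t, ht, hxt⟩ ⟨s, hs, hxs⟩
      have hpad1 : tpad hn q1.2 = p1.2 := by
        funext j
        by_cases hj : j.val < n₀
        · simp [tpad, hj, hq12, tres, Fin.castLE]
        · simp [tpad, hj, hz1 j (by omega)]
      have hpad2 : tpad hn q2.2 = p2.2 := by
        funext j
        by_cases hj : j.val < n₀
        · simp [tpad, hj, hq22, tres, Fin.castLE]
        · simp [tpad, hj, hz2 j (by omega)]
      have hx1 : tpad hn x₀ ∈ (fun t => p1.2 + t) ''
          ((T (tproj hk₀ hk p1.1)).image (tpad hn) : Set (Fin n → ℤ)) := by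
        refine ⟨tpad hn t, ?_, ?_⟩
        · simp only [Finset.coe_image, Set.mem_image, Finset.mem_coe]
          exact ⟨t, by rwa [← hq11], rfl⟩
        · rw [← hxt, tpad_add, hpad1]
      have hx2 : tpad hn x₀ ∈ (fun t => p2.2 + t) ''
          ((T (tproj hk₀ hk p2.1)).image (tpad hn) : Set (Fin n → ℤ)) := by
        refine ⟨tpad hn s, ?_, ?_⟩
        · simp only [Finset.coe_image, Set.mem_image, Finset.mem_coe]
          exact ⟨s, by rwa [← hq21], rfl⟩
        · rw [← hxs, tpad_add, hpad2]
      have hpp : p1 = p2 := by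
        by_contra hne'
        have := hdis hp1 hp2 hne'
        rw [Function.onFun, Set.disjoint_left] at this
        exact this hx1 hx2
      apply hne
      rw [Prod.ext_iff, hq11, hq12, hq21, hq22, hpp]
      exact ⟨rfl, rfl⟩
    · apply Set.eq_univ_of_forall
      intro x₀
      have hx : tpad hn x₀ ∈ ⋃ p ∈ Λ', (fun t => p.2 + t) ''
          (((T (tproj hk₀ hk p.1)).image (tpad hn) : Finset _) : Set _) := by
        rw [hcov]; trivial
      simp only [Set.mem_iUnion, Set.mem_image, Finset.coe_image, Finset.mem_coe] at hx
      obtain ⟨⟨i, w⟩, hiw, u, ⟨t, ht, rfl⟩, hxt⟩ := hx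
      have hz : ∀ j : Fin n, n₀ ≤ j.val → w j = 0 := by
        intro j hj
        have := congrFun hxt j
        simp only [Pi.add_apply, tpad, dif_neg (by omega : ¬ j.val < n₀)] at this
        omega
      refine Set.mem_biUnion (x := (tproj hk₀ hk i, tres hn w))
        ⟨(i, w), hiw, rfl, rfl, hz⟩ ?_
      refine ⟨t, ht, ?_⟩
      funext m
      have := congrFun hxt (Fin.castLE hn m)
      simp only [Pi.add_apply, tpad, Fin.castLE, dif_pos (show m.val < n₀ from m.isLt)] at this
      simp only [tres, Pi.add_apply, Fin.castLE, Fin.eta] at this ⊢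
      omega

lemma list_toFinset_map' {α β : Type*} [DecidableEq α] [DecidableEq β] (f : α → β)
    (l : List α) : (l.map f).toFinset = l.toFinset.image f := by
  ext x; simp

def tmap (hk₀ : 0 < k₀) (hn : n₀ ≤ n) (hk : k₀ ≤ k)
    (T : Fin k₀ → List (Fin n₀ → ℤ)) : Fin k → List (Fin n → ℤ) :=
  fun i => (T (tproj hk₀ hk i)).map (tpad hn)

lemma tpad_primrec (hn : n₀ ≤ n) : Primrec (tpad hn) := by
  rw [Primrec.fin_curry]
  have h1 : ∀ j : Fin n, Primrec fun v : Fin n₀ → ℤ => tpad hn v j := by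
    intro j
    by_cases h : j.val < n₀
    · simp only [tpad, dif_pos h]
      exact Primrec.fin_app.comp .id (.const _)
    · simp only [tpad, dif_neg h]
      exact Primrec.const 0
  exact (Primrec.fin_curry₁.mpr h1).swap

lemma tmap_computable (hk₀ : 0 < k₀) (hn : n₀ ≤ n) (hk : k₀ ≤ k) :
    Computable (tmap hk₀ hn hk) := by
  apply Primrec.to_comp
  rw [Primrec.fin_curry]
  have h1 : ∀ i : Fin k, Primrec fun T : Fin k₀ → List (Fin n₀ → ℤ) =>
      (T (tproj hk₀ hk i)).map (tpad hn) := by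
    intro i
    exact Primrec.list_map (Primrec.fin_app.comp .id (.const _))
      ((tpad_primrec hn).comp₂ Primrec₂.right)
  exact (Primrec.fin_curry₁.mpr h1).swap

end Aux

set_option maxHeartbeats 1000000 in
/-- Monotonicity of undecidability in the parameters `(n, k)`: if translational tiling of
`ℤ^n₀` with `k₀` (nonempty) tiles is undecidable and `n₀ ≤ n`, `k₀ ≤ k`, then translational
tiling of `ℤⁿ` with `k` (nonempty) tiles is undecidable. Tiles are presented to the algorithm
as `k`-tuples of (nonempty) finite lists of integer vectors. -/
theorem undecidability_monotone (n₀ k₀ n k : ℕ) (hn₀ : 0 < n₀) (hk₀ : 0 < k₀)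
    (hn : n₀ ≤ n) (hk : k₀ ≤ k)
    (h : ¬ ∃ f : (Fin k₀ → List (Fin n₀ → ℤ)) → Bool, Computable f ∧
      ∀ T : Fin k₀ → List (Fin n₀ → ℤ), (∀ i, (T i).toFinset.Nonempty) →
        (f T = true ↔ TranslTiles n₀ k₀ fun i => (T i).toFinset)) :
    ¬ ∃ f : (Fin k → List (Fin n → ℤ)) → Bool, Computable f ∧
      ∀ T : Fin k → List (Fin n → ℤ), (∀ i, (T i).toFinset.Nonempty) →
        (f T = true ↔ TranslTiles n k fun i => (T i).toFinset) := by
  rintro ⟨f, hf, hspec⟩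
  apply h
  refine ⟨fun T => f (tmap hk₀ hn hk T), hf.comp (tmap_computable hk₀ hn hk), ?_⟩
  intro T hT
  have hT' : ∀ i, ((tmap hk₀ hn hk T i)).toFinset.Nonempty := by
    intro i
    simp only [tmap, list_toFinset_map']
    exact (hT _).image _
  rw [hspec _ hT']
  have hfe : (fun i => (tmap hk₀ hn hk T i).toFinset) =
      fun i => ((fun j => (T j).toFinset) (tproj hk₀ hk i)).image (tpad hn) := by
    funext i
    simp [tmap, list_toFinset_map']
  rw [hfe]
  exact (tiling_iff hk₀ hn hk (fun i => (T i).toFinset)).symm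
end
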